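/- arXiv:2311.00466 — 8 statements merged into one kernel-verified Lean document; each statement's English description precedes it below -/
import Mathlib

section
/- Let H = (V,E) be a hypergraph, let e₁, e₂ ∈ E, and let H' = (V, E ∪ {e₁ ∩ e₂}). If H' contains a d-semi-ladder, then H also contains a d-semi-ladder. -/
/-- A `d`-semi-ladder in a hypergraph with edge set `E`: vertices `w 0, …, w d` and
edges `f 0, …, f d ∈ E` with `w i ∉ f i` and `w i ∈ f j` whenever `i < j`. -/
def HasSemiLadder {α : Type*} (E : Set (Set α)) (d : ℕ) : Prop :=
  ∃ (w : Fin (d+1) → α) (f : Fin (d+1) → Set α),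
    (∀ i, f i ∈ E) ∧ (∀ i, w i ∉ f i) ∧ ∀ i j, i < j → w i ∈ f j

/-- Lemma 1: adding the intersection of two edges does not create a `d`-semi-ladder. -/
theorem stmt_0 {α : Type*} (E : Set (Set α)) (e₁ e₂ : Set α)
    (h₁ : e₁ ∈ E) (h₂ : e₂ ∈ E) (d : ℕ)
    (h : HasSemiLadder (insert (e₁ ∩ e₂) E) d) :
    HasSemiLadder E d := by
  classical
  obtain ⟨w, f, hfE, hwf, hlt⟩ := h
  refine ⟨w, fun i => if f i ∈ E then f i else (if w i ∈ e₁ then e₂ else e₁), ?_, ?_, ?_⟩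
  · intro i
    by_cases hi : f i ∈ E
    · simp [hi]
    · by_cases hw : w i ∈ e₁ <;> simp [hi, hw, h₁, h₂]
  · intro i
    by_cases hi : f i ∈ E
    · simpa [hi] using hwf i
    · have hinter : f i = e₁ ∩ e₂ := by
        rcases hfE i with h' | h'
        · exact h'
        · exact absurd h' hi
      have hni : w i ∉ e₁ ∩ e₂ := hinter ▸ hwf i
      by_cases hw : w i ∈ e₁
      · simp only [hi, if_neg, hw, if_pos]
        exact fun h2 => hni ⟨hw, h2⟩
      · simp [hi, hw]
  · intro i j hij
    by_cases hj : f j ∈ E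
    · simpa [hj] using hlt i j hij
    · have hinter : f j = e₁ ∩ e₂ := by
        rcases hfE j with h' | h'
        · exact h'
        · exact absurd h' hj
      have := hlt i j hij
      rw [hinter] at this
      by_cases hw : w j ∈ e₁ <;> simp [hj, hw, this.1, this.2]
end

section
/- Let H be a hypergraph and H' its intersection-closure. If H' contains a (d+1)-ladder, then H contains a (d+1)-semi-ladder. -/
/-- A `d`-ladder in a hypergraph with edge set `E`. -/
def HasLadder {α : Type*} (E : Set (Set α)) (d : ℕ) : Prop :=
  ∃ (w : Fin (d+1) → α) (f : Fin (d+1) → Set α),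
    (∀ i, f i ∈ E) ∧ ∀ i j, i < j ↔ w i ∈ f j

/-- The intersection-closure of `E`: the minimal family containing `E`, the full
vertex set, and closed under intersections. -/
def InterClosure {α : Type*} (E : Set (Set α)) : Set (Set α) :=
  insert Set.univ { s | ∃ F : Set (Set α), F ⊆ E ∧ F.Nonempty ∧ s = ⋂₀ F }

/-- If the intersection-closure of `H` contains a `(d+1)`-ladder,
then `H` contains a `(d+1)`-semi-ladder. -/
theorem stmt_1 {α : Type*} [Fintype α] (E : Set (Set α)) (d : ℕ)
    (h : HasLadder (InterClosure E) (d+1)) :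
    HasSemiLadder E (d+1) := by
  obtain ⟨w, f, hfE, hlad⟩ := h
  have hnot : ∀ i, w i ∉ f i := fun i hi => lt_irrefl i ((hlad i i).mpr hi)
  have hg : ∀ i, ∃ g, g ∈ E ∧ w i ∉ g ∧ f i ⊆ g := by
    intro i
    rcases hfE i with huniv | ⟨F, hFE, hFne, hFeq⟩
    · exact absurd (huniv ▸ Set.mem_univ (w i)) (hnot i)
    · have : ¬ ∀ g ∈ F, w i ∈ g := by
        intro hall
        exact hnot i (hFeq ▸ Set.mem_sInter.mpr hall)
      push_neg at this
      obtain ⟨g, hgF, hgw⟩ := this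
      exact ⟨g, hFE hgF, hgw, hFeq ▸ Set.sInter_subset_of_mem hgF⟩
  choose g hgE hgw hgsub using hg
  exact ⟨w, g, hgE, hgw, fun i j hij => hgsub j ((hlad i j).mp hij)⟩
end

section
/- Let H be a hypergraph and H' its intersection-closure. If every strictly increasing chain of edges of H' ending at any edge has length at most d+1 (i.e., L(H') ≤ d+1), then H is (d+1)-semi-ladder-free. -/
/-- If every strict chain of edges of the intersection-closure of `H` has length at
most `d+1` (i.e. `L(H') ≤ d+1`), then `H` is `(d+1)`-semi-ladder-free. -/
theorem stmt_3 {α : Type*} [Fintype α] (E : Set (Set α)) (d : ℕ)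
    (hL : ∀ (l : ℕ) (c : Fin (l+1) → Set α),
      (∀ i, c i ∈ InterClosure E) → (∀ i j, i < j → c i ⊂ c j) → l ≤ d+1) :
    ¬ HasSemiLadder E (d+1) := by
  rintro ⟨w, f, hfE, hwf, hwj⟩
  set c : Fin (d+2+1) → Set α :=
    fun k => ⋂ (j : Fin (d+2)) (_ : (k : ℕ) ≤ (j : ℕ)), f j with hc
  have key := hL (d+2) c ?_ ?_
  · omega
  · intro k
    by_cases hk : (k : ℕ) ≤ d+1
    · refine Or.inr ⟨f '' {j : Fin (d+2) | (k : ℕ) ≤ (j : ℕ)}, ?_, ?_, ?_⟩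
      · rintro s ⟨j, _, rfl⟩; exact hfE j
      · exact ⟨f ⟨k, by omega⟩, ⟨⟨k, by omega⟩, by simp, rfl⟩⟩
      · ext x
        simp [hc, Set.sInter_image]
    · left
      simp only [hc]
      apply Set.eq_univ_of_forall
      intro x
      simp only [Set.mem_iInter]
      intro j hj
      exact absurd hj (by omega)
  · intro i j hij
    have hij' : (i : ℕ) < (j : ℕ) := hij
    have hiN : (i : ℕ) < d + 2 := by omega
    set v : α := w ⟨(i : ℕ), hiN⟩ with hv
    constructor
    · intro x hx
      simp only [hc, Set.mem_iInter] at hx ⊢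
      intro t ht
      exact hx t (by omega)
    · intro hsub
      have hvj : v ∈ c j := by
        simp only [hc, Set.mem_iInter]
        intro t ht
        exact hwj _ t (by simpa [Fin.lt_def] using (by omega : (i : ℕ) < (t : ℕ)))
      have hvi : v ∉ c i := by
        simp only [hc, Set.mem_iInter]
        intro h
        exact hwf _ (h ⟨(i : ℕ), hiN⟩ (by simp))
      exact hvi (hsub hvj)
end

section
/- For a hypergraph H and a positive integer d, the following are equivalent: (i) H is (d+1)-semi-ladder-free; (ii) the intersection-closure H' of H is (d+1)-ladder-free; (iii) L(H') ≤ d+1. -/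
lemma extract_edge {α : Type*} {E : Set (Set α)} {s : Set α}
    (hs : s ∈ InterClosure E) {x : α} (hx : x ∉ s) :
    ∃ f ∈ E, x ∉ f ∧ s ⊆ f := by
  simp only [InterClosure, Set.mem_insert_iff, Set.mem_setOf_eq] at hs
  rcases hs with rfl | ⟨F, hFE, hFne, rfl⟩
  · exact absurd (Set.mem_univ x) hx
  · rw [Set.mem_sInter] at hx
    push_neg at hx
    obtain ⟨f, hfF, hxf⟩ := hx
    exact ⟨f, hFE hfF, hxf, Set.sInter_subset_of_mem hfF⟩

lemma ladder_to_semi {α : Type*} {E : Set (Set α)} {n : ℕ}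
    (h : HasLadder (InterClosure E) n) : HasSemiLadder E n := by
  obtain ⟨w, g, hg, hiff⟩ := h
  have key : ∀ j, ∃ f ∈ E, w j ∉ f ∧ g j ⊆ f := fun j =>
    extract_edge (hg j) (fun h => lt_irrefl j ((hiff j j).2 h))
  choose f hfE hwf hsub using key
  exact ⟨w, f, hfE, hwf, fun i j hij => hsub j ((hiff i j).1 hij)⟩

/-- The tail-intersection family of a semi-ladder. -/
def tailInter {α : Type*} {n : ℕ} (f : Fin n → Set α) (j : Fin n) : Set α :=
  ⋂₀ (f '' {k | j ≤ k})

lemma tailInter_mem {α : Type*} {E : Set (Set α)} {n : ℕ} {f : Fin n → Set α}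
    (hf : ∀ i, f i ∈ E) (j : Fin n) : tailInter f j ∈ InterClosure E := by
  refine Or.inr ⟨f '' {k | j ≤ k}, ?_, ⟨f j, ⟨j, le_refl j, rfl⟩⟩, rfl⟩
  rintro s ⟨k, -, rfl⟩; exact hf k

lemma tailInter_mono {α : Type*} {n : ℕ} (f : Fin n → Set α) {i j : Fin n}
    (hij : i ≤ j) : tailInter f i ⊆ tailInter f j := by
  intro x hx
  rintro s ⟨k, hk, rfl⟩
  exact hx _ ⟨k, le_trans hij hk, rfl⟩

lemma mem_tailInter {α : Type*} {n : ℕ} {w : Fin n → α} {f : Fin n → Set α}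
    (hwf : ∀ i, w i ∉ f i) (hwj : ∀ i j, i < j → w i ∈ f j) (i j : Fin n) :
    w i ∈ tailInter f j ↔ i < j := by
  constructor
  · intro hm
    by_contra h
    push_neg at h
    exact hwf i (hm (f i) ⟨i, h, rfl⟩)
  · intro hij
    rintro s ⟨k, hk, rfl⟩
    exact hwj i k (lt_of_lt_of_le hij hk)

lemma semi_to_ladder {α : Type*} {E : Set (Set α)} {n : ℕ}
    (h : HasSemiLadder E n) : HasLadder (InterClosure E) n := by
  obtain ⟨w, f, hfE, hwf, hwj⟩ := h
  exact ⟨w, tailInter f, fun j => tailInter_mem hfE j,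
    fun i j => (mem_tailInter hwf hwj i j).symm⟩

lemma univ_mem_interClosure {α : Type*} (E : Set (Set α)) :
    (Set.univ : Set α) ∈ InterClosure E := Or.inl rfl

/-- Theorem 1: for a hypergraph `H` and positive integer `d`, the following are
equivalent: (i) `H` is `(d+1)`-semi-ladder-free; (ii) the intersection-closure `H'`
is `(d+1)`-ladder-free; (iii) `L(H') ≤ d+1`. -/
theorem stmt_4 {α : Type*} [Fintype α] (E : Set (Set α)) (d : ℕ) (hd : 0 < d) :
    (¬ HasSemiLadder E (d+1) ↔ ¬ HasLadder (InterClosure E) (d+1)) ∧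
    (¬ HasSemiLadder E (d+1) ↔
      ∀ (l : ℕ) (c : Fin (l+1) → Set α),
        (∀ i, c i ∈ InterClosure E) → (∀ i j, i < j → c i ⊂ c j) → l ≤ d+1) := by
  constructor
  · exact not_congr ⟨semi_to_ladder, ladder_to_semi⟩
  constructor
  · -- ¬SL → chain bound
    intro hns l c hc hchain
    by_contra hl
    push_neg at hl  -- d+2 ≤ l
    apply hns
    -- build a semi-ladder from the chain c 0 ⊂ c 1 ⊂ ... ⊂ c (d+2)
    have hlt : ∀ i : Fin (d+2), (i : ℕ) + 1 < l + 1 := fun i => by omega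
    have hlt' : ∀ i : Fin (d+2), (i : ℕ) < l + 1 := fun i => by omega
    have hss : ∀ i : Fin (d+2),
        c ⟨i, hlt' i⟩ ⊂ c ⟨(i : ℕ) + 1, hlt i⟩ := fun i =>
      hchain _ _ (by simp [Fin.lt_def])
    have hw : ∀ i : Fin (d+2), ∃ x, x ∈ c ⟨(i : ℕ) + 1, hlt i⟩ ∧ x ∉ c ⟨i, hlt' i⟩ :=
      fun i => Set.exists_of_ssubset (hss i)
    choose w hw1 hw2 using hw
    have key : ∀ i : Fin (d+2), ∃ f ∈ E, w i ∉ f ∧ c ⟨i, hlt' i⟩ ⊆ f := fun i =>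
      extract_edge (hc _) (hw2 i)
    choose f hfE hwf hsub using key
    refine ⟨w, f, hfE, hwf, fun i j hij => ?_⟩
    apply hsub j
    have hmono : c ⟨(i : ℕ) + 1, hlt i⟩ ⊆ c ⟨j, hlt' j⟩ := by
      rcases eq_or_lt_of_le (Nat.succ_le_of_lt (Fin.lt_def.mp hij)) with heq | hlt2
      · have : (⟨(i : ℕ) + 1, hlt i⟩ : Fin (l+1)) = ⟨j, hlt' j⟩ := by
          simp only [Fin.mk.injEq]; omega
        rw [this]
      · exact (hchain _ _ (by simp [Fin.lt_def, hlt2])).subset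
    exact hmono (hw1 i)
  · -- chain bound → ¬SL
    intro hbound hsl
    obtain ⟨w, f, hfE, hwf, hwj⟩ := hsl
    -- chain : tailInter f 0 ⊂ ... ⊂ tailInter f (d+1) ⊂ univ, length d+2
    have hmemtail := mem_tailInter hwf hwj
    have hne : ∀ j : Fin (d+2), tailInter f j ≠ Set.univ := fun j h => by
      have := (hmemtail j j)
      rw [h] at this
      exact lt_irrefl j (this.mp (Set.mem_univ _))
    have := hbound (d+2) (fun i =>
      if h : (i : ℕ) < d + 2 then tailInter f ⟨i, h⟩ else Set.univ)
      (fun i => by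
        split
        · exact tailInter_mem hfE _
        · exact univ_mem_interClosure E)
      (fun i j hij => by
        rcases Nat.lt_or_ge (j : ℕ) (d+2) with hj | hj
        · have hi : (i : ℕ) < d + 2 := lt_trans (Fin.lt_def.mp hij) hj
          rw [dif_pos hi, dif_pos hj]
          constructor
          · exact tailInter_mono f (Fin.mk_le_mk.mpr (le_of_lt (Fin.lt_def.mp hij)))
          · intro hsub
            have hwin : w ⟨i, hi⟩ ∈ tailInter f ⟨j, hj⟩ :=
              (hmemtail _ _).mpr (Fin.mk_lt_mk.mpr (Fin.lt_def.mp hij))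
            have hwout : w ⟨i, hi⟩ ∉ tailInter f ⟨i, hi⟩ := fun h =>
              lt_irrefl _ ((hmemtail _ _).mp h)
            exact hwout (hsub hwin)
        · have hi : (i : ℕ) < d + 2 := by
            have := Fin.lt_def.mp hij
            have := j.isLt
            omega
          rw [dif_pos hi, dif_neg (by omega)]
          exact (Set.ssubset_univ_iff).mpr (hne _))
    omega
end

section
/- Let H = (V,E) be an intersection-closed hypergraph, let e ∈ E, and let e₀ ⊂ e₁ ⊂ … ⊂ e_l = e be a maximal e-chain in H (i.e., a strict chain of edges ending at e that cannot be refined or extended downward). For each i ∈ [0;l−1], let vᵢ be an arbitrary element of e_{i+1} ∖ eᵢ. Then M_H({v₀,…,v_{l−1}}) = e, where M_H(S) is the intersection of all edges of H containing S. -/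
/-!
Maximality of the chain forces `e₀` to be a minimal edge and each `e_{i+1}` to cover `e_i`
among the edges. If an edge `f` contains all `v_i`, then inductively `e_{i+1} ∩ f` is an edge
lying between `e_i` and `e_{i+1}` that contains `v_i ∉ e_i`, hence equals `e_{i+1}`; so `e ⊆ f`.
-/

/-- `M E S` is the intersection of all edges of `E` containing `S`
(equal to `univ` when there is no such edge). -/
def M {α : Type*} (E : Set (Set α)) (S : Set α) : Set α :=
  ⋂₀ { e | e ∈ E ∧ S ⊆ e }

namespace RelSeries
variable {β : Type*} {r : SetRel β β}

@[simp] lemma last_insertNth (p : RelSeries r) (i : Fin p.length) (a : β)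
    (prev_connect : (p i.castSucc, a) ∈ r) (connect_next : (a, p i.succ) ∈ r) :
    (p.insertNth i a prev_connect connect_next).last = p.last := by
  change Fin.insertNth (α := fun _ => β) i.succ.castSucc a p (Fin.last (p.length + 1)) =
    p (Fin.last p.length)
  rw [Fin.insertNth_apply_above (Fin.castSucc_lt_last i.succ)]
  simp only [eq_rec_constant]; rfl
end RelSeries

namespace LTSeries
variable {β : Type*} [Preorder β] (p : LTSeries β)

theorem isMin_head_of_forall_length_le
    (hmax : ∀ q : LTSeries β, q.last = p.last → q.length ≤ p.length) : IsMin p.head :=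
  isMin_iff_forall_not_lt.2 fun b hb => by
    simpa using hmax (p.cons b hb) (p.last_cons b hb)

theorem covBy_of_forall_length_le
    (hmax : ∀ q : LTSeries β, q.last = p.last → q.length ≤ p.length) (i : Fin p.length) :
    p i.castSucc ⋖ p i.succ :=
  ⟨p.step i, fun b hb₁ hb₂ => by
    simpa using hmax (p.insertNth i b hb₁ hb₂) (p.last_insertNth i b hb₁ hb₂)⟩
end LTSeries

namespace InfClosed
variable {L : Type*} [SemilatticeInf L] {S : Set L}

theorem le_of_isMin (hS : InfClosed S) {x : S} (hx : IsMin x) {f : L} (hf : f ∈ S) :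
    (x : L) ≤ f :=
  le_trans (hx (b := ⟨_, hS x.2 hf⟩) (show (x : L) ⊓ f ≤ x from inf_le_left)) inf_le_right

theorem le_of_covBy (hS : InfClosed S) {x y : S} (hxy : x ⋖ y) {f : L} (hf : f ∈ S)
    (hxf : (x : L) ≤ f) (hyf : ¬ (y : L) ⊓ f ≤ x) : (y : L) ≤ f := by
  let g : S := ⟨y ⊓ f, hS y.2 hf⟩
  have hgy : g = y := (hxy.wcovBy.eq_or_eq (c := g) (le_inf hxy.le hxf)
    (show (y : L) ⊓ f ≤ y from inf_le_left)).resolve_left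
    fun h => hyf (congrArg Subtype.val h).le
  exact hgy ▸ inf_le_right

theorem forall_le_of_covBy (hS : InfClosed S) (p : LTSeries S) (hmin : IsMin p.head)
    (hcov : ∀ i : Fin p.length, p i.castSucc ⋖ p i.succ) {f : L} (hf : f ∈ S)
    (hstep : ∀ i : Fin p.length, ¬ (p i.succ : L) ⊓ f ≤ p i.castSucc) (i : Fin (p.length + 1)) :
    (p i : L) ≤ f := by
  induction i using Fin.induction with
  | zero => exact hS.le_of_isMin hmin hf
  | succ i ih => exact hS.le_of_covBy (hcov i) hf ih (hstep i)
end InfClosed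

theorem stmt_6_general {α : Type*} (E : Set (Set α))
    (hcl : Set.univ ∈ E ∧ ∀ a ∈ E, ∀ b ∈ E, a ∩ b ∈ E)
    (e : Set α) (he : e ∈ E) (l : ℕ) (c : Fin (l+1) → Set α)
    (hcE : ∀ i, c i ∈ E) (hchain : ∀ i j, i < j → c i ⊂ c j)
    (hlast : c (Fin.last l) = e)
    (hmax : ∀ (l' : ℕ) (c' : Fin (l'+1) → Set α),
      (∀ i, c' i ∈ E) → (∀ i j, i < j → c' i ⊂ c' j) → c' (Fin.last l') = e → l' ≤ l)
    (v : Fin l → α) (hv : ∀ i : Fin l, v i ∈ c i.succ \ c i.castSucc) :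
    M E (Set.range v) = e := by
  have hE : InfClosed E := fun a ha b hb => hcl.2 a ha b hb
  let p : LTSeries E := LTSeries.mk l (fun i => ⟨c i, hcE i⟩) fun i j h => hchain i j h
  have hlong (q : LTSeries E) (hq : q.last = p.last) : q.length ≤ p.length :=
    hmax q.length (fun i => q i) (fun i => (q i).2) (fun i j h => q.strictMono h)
      (hlast ▸ congrArg Subtype.val hq)
  have hsub (f : Set α) (hf : f ∈ E) (hvf : Set.range v ⊆ f) : e ⊆ f :=
    hlast ▸ hE.forall_le_of_covBy p (p.isMin_head_of_forall_length_le hlong)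
      (p.covBy_of_forall_length_le hlong) hf
      (fun i hi => (hv i).2 (hi ⟨(hv i).1, hvf ⟨i, rfl⟩⟩)) (Fin.last l)
  refine subset_antisymm (Set.sInter_subset_of_mem ⟨he, ?_⟩)
    (Set.subset_sInter fun f hf => hsub f hf.1 hf.2)
  rintro _ ⟨i, rfl⟩
  exact hlast ▸ p.monotone (Fin.le_last i.succ) (hv i).1

/-- Lemma 3: in an intersection-closed hypergraph, if `c 0 ⊂ … ⊂ c l = e` is a
maximal `e`-chain and `v i ∈ c (i+1) ∖ c i`, then `M_H({v 0,…,v (l-1)}) = e`. -/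
theorem stmt_6 {α : Type*} [Fintype α] (E : Set (Set α))
    (hcl : Set.univ ∈ E ∧ ∀ a ∈ E, ∀ b ∈ E, a ∩ b ∈ E)
    (e : Set α) (he : e ∈ E) (l : ℕ) (c : Fin (l+1) → Set α)
    (hcE : ∀ i, c i ∈ E) (hchain : ∀ i j, i < j → c i ⊂ c j)
    (hlast : c (Fin.last l) = e)
    (hmax : ∀ (l' : ℕ) (c' : Fin (l'+1) → Set α),
      (∀ i, c' i ∈ E) → (∀ i j, i < j → c' i ⊂ c' j) → c' (Fin.last l') = e → l' ≤ l)
    (v : Fin l → α) (hv : ∀ i : Fin l, v i ∈ c i.succ \ c i.castSucc) :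
    M E (Set.range v) = e :=
  stmt_6_general E hcl e he l c hcE hchain hlast hmax v hv
end

section
/- Let H = (V,E) be an intersection-closed, reduced hypergraph with L(H) ≤ d+1, and let n = |V|. Then ∑_{e ∈ E, e ≠ V} |e| ≤ n^d, and consequently ||H|| = ∑_{e∈E} |e| ≤ n^d + n. -/
/-!
Induction on `d`, working in a ground set `U` instead of `univ`. For `v ∈ U` let `M` be the
smallest edge containing `v`. The edges through `v` are the edges containing `M`, and
`e ↦ e \ M` maps them bijectively onto the link of `M`: an intersection-closed reduced family on
`U \ M` whose chains are one shorter, since adding `M` to a chain of the link and prepending `∅`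
gives a chain of `E`. By induction the link has at most `1 + |U \ M|^(d-1) ≤ |U|^(d-1)` proper
edges (at most one, `∅`, when `d = 1`), so every vertex lies in at most `|U|^(d-1)` proper edges,
and double counting gives `∑ |e| ≤ |U| · |U|^(d-1)`.
-/

namespace Set

variable {α : Type*} [Finite α]

theorem sInter_mem_of_inter_mem {E : Set (Set α)} (hcl : ∀ a ∈ E, ∀ b ∈ E, a ∩ b ∈ E)
    {S : Set (Set α)} (hSE : S ⊆ E) (hS : S.Nonempty) : ⋂₀ S ∈ E := by
  have hfin := S.toFinite
  have := Finset.inf'_mem E hcl hfin.toFinset (by simpa using hS) id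
    fun e he => hSE (hfin.mem_toFinset.1 he)
  rwa [Finset.inf'_eq_inf, Finset.inf_id_eq_sInf, hfin.coe_toFinset] at this

theorem finsum_ncard_le_mul {F : Set (Set α)} {U : Set α} {B : ℕ}
    (hF : ∀ e ∈ F, e ⊆ U) (hB : ∀ v ∈ U, {e ∈ F | v ∈ e}.ncard ≤ B) :
    ∑ᶠ e ∈ F, e.ncard ≤ U.ncard * B := by
  classical
  have := Fintype.ofFinite α
  have key := Finset.sum_card_inter_le (s := U.toFinset) (B := F.toFinset.image fun e => e.toFinset)
    (n := B) ?_
  · rw [Finset.sum_image fun _ _ _ _ h => toFinset_inj.1 h] at key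
    rw [finsum_mem_eq_toFinset_sum, ncard_eq_toFinset_card']
    convert key using 2 with e he
    rw [ncard_eq_toFinset_card', Finset.inter_eq_right.2
      (toFinset_subset_toFinset.2 (hF e (mem_toFinset.1 he)))]
  · intro v hv
    rw [Finset.filter_image, Finset.card_image_of_injective _ fun _ _ h => toFinset_inj.1 h]
    convert hB v (mem_toFinset.1 hv)
    rw [ncard_eq_toFinset_card']
    congr 1
    ext e
    simp

theorem ncard_le_one_add_finsum_ncard (F : Set (Set α)) :
    F.ncard ≤ 1 + ∑ᶠ e ∈ F, e.ncard := by
  classical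
  have := Fintype.ofFinite α
  rw [finsum_mem_eq_toFinset_sum, ncard_eq_toFinset_card', ← Finset.sum_erase _ (ncard_empty α)]
  have hpos : ∀ e ∈ F.toFinset.erase ∅, 1 ≤ e.ncard := fun e he =>
    (ncard_pos).2 (nonempty_iff_ne_empty.2 (Finset.ne_of_mem_erase he))
  have hcard := Finset.card_nsmul_le_sum _ (fun e : Set α => e.ncard) 1 hpos
  have herase := Finset.pred_card_le_card_erase (s := F.toFinset) (a := ∅)
  rw [smul_eq_mul, mul_one] at hcard
  omega

end Set

namespace IntersectionClosed

open Set

variable {α : Type*} {E : Set (Set α)} {U M : Set α}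

/-- `⋂₀ E = ∅` is encoded as `∅ ∈ E`, which is equivalent for intersection-closed finite `E`. -/
structure IsReduced (E : Set (Set α)) (U : Set α) : Prop where
  subset_top : ∀ e ∈ E, e ⊆ U
  top_mem : U ∈ E
  empty_mem : ∅ ∈ E
  inter_mem : ∀ a ∈ E, ∀ b ∈ E, a ∩ b ∈ E

def ChainLengthLE (E : Set (Set α)) (k : ℕ) : Prop :=
  ∀ (l : ℕ) (c : Fin (l + 1) → Set α), (∀ i, c i ∈ E) → StrictMono c → l ≤ k

theorem ChainLengthLE.length_le_of_nonempty {k l : ℕ}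
    (hE : ChainLengthLE E (k + 1)) (h0 : ∅ ∈ E) (c : Fin (l + 1) → Set α) (hc : ∀ i, c i ∈ E)
    (hmono : StrictMono c) (hne : (c 0).Nonempty) : l ≤ k := by
  have := hE (l + 1) (Matrix.vecCons ∅ c) (Fin.cases h0 hc) (hmono.vecCons hne.empty_ssubset)
  omega

theorem IsReduced.eq_empty_of_mem_sdiff {e : Set α} (h : IsReduced E U)
    (hL : ChainLengthLE E 1) (he : e ∈ E \ {U}) : e = ∅ := by
  by_contra hne
  have := hL.length_le_of_nonempty h.empty_mem ![e, U] (Fin.forall_fin_two.2 ⟨he.1, h.top_mem⟩)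
    (by simpa using (h.subset_top e he.1).ssubset_of_ne he.2)
    (by simpa [nonempty_iff_ne_empty] using hne)
  omega

def link (E : Set (Set α)) (M : Set α) : Set (Set α) := {f | Disjoint f M ∧ f ∪ M ∈ E}

theorem IsReduced.link (h : IsReduced E U) (hM : M ∈ E) : IsReduced (link E M) (U \ M) where
  subset_top f hf := subset_sdiff.2 ⟨subset_union_left.trans (h.subset_top _ hf.2), hf.1⟩
  top_mem := ⟨disjoint_sdiff_left, (sdiff_union_of_subset (h.subset_top M hM)).symm ▸ h.top_mem⟩
  empty_mem := ⟨empty_disjoint M, by simpa⟩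
  inter_mem f hf g hg := ⟨hf.1.mono_left inter_subset_left, by
    rw [inter_union_distrib_right]; exact h.inter_mem _ hf.2 _ hg.2⟩

theorem ChainLengthLE.link {k : ℕ} (hE : ChainLengthLE E (k + 1)) (h0 : ∅ ∈ E) (hM : M.Nonempty) :
    ChainLengthLE (link E M) k := by
  intro l c hc hmono
  refine hE.length_le_of_nonempty h0 (fun i => c i ∪ M) (fun i => (hc i).2) ?_
    (hM.mono subset_union_right)
  intro i j hij
  refine (union_subset_union_left M (hmono hij).le).lt_of_ne fun heq => (hmono hij).ne ?_
  rw [← (hc i).1.sup_sdiff_cancel_right, ← (hc j).1.sup_sdiff_cancel_right]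
  exact congrArg (· \ M) heq

theorem ncard_link_sdiff_singleton (hMU : M ⊆ U) :
    (link E M \ {U \ M}).ncard = {e ∈ E \ {U} | M ⊆ e}.ncard := by
  refine ncard_congr (fun f _ => f ∪ M) ?_ ?_ ?_
  · rintro f ⟨⟨hfM, hfE⟩, hfU⟩
    refine ⟨⟨hfE, fun hU => hfU ?_⟩, subset_union_right⟩
    rw [mem_singleton_iff, ← mem_singleton_iff.1 hU]
    exact hfM.sup_sdiff_cancel_right.symm
  · rintro f g ⟨⟨hfM, -⟩, -⟩ ⟨⟨hgM, -⟩, -⟩ heq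
    rw [← hfM.sup_sdiff_cancel_right, ← hgM.sup_sdiff_cancel_right]
    exact congrArg (· \ M) heq
  · rintro e ⟨⟨heE, heU⟩, hMe⟩
    refine ⟨e \ M, ⟨⟨disjoint_sdiff_left, by rwa [sdiff_union_of_subset hMe]⟩, fun hU => heU ?_⟩,
      sdiff_union_of_subset hMe⟩
    rw [← sdiff_union_of_subset hMe, ← sdiff_union_of_subset hMU]
    exact congrArg (· ∪ M) (mem_singleton_iff.1 hU)

theorem IsReduced.ncard_sdiff_singleton_le [Finite α] {m : ℕ} (h : IsReduced E U)
    (hL : ChainLengthLE E (m + 1)) (hsum : ∑ᶠ e ∈ E \ {U}, e.ncard ≤ U.ncard ^ m) :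
    (E \ {U}).ncard ≤ (U.ncard + 1) ^ m := by
  rcases Nat.eq_zero_or_pos m with rfl | hm
  · simpa using ncard_le_ncard fun e he => mem_singleton_iff.2 (h.eq_empty_of_mem_sdiff hL he)
  · calc (E \ {U}).ncard ≤ 1 + ∑ᶠ e ∈ E \ {U}, e.ncard := ncard_le_one_add_finsum_ncard _
      _ ≤ U.ncard ^ m + 1 ^ m := by rw [one_pow]; omega
      _ ≤ (U.ncard + 1) ^ m := pow_add_pow_le (Nat.zero_le _) zero_le_one hm.ne'

theorem IsReduced.finsum_ncard_sdiff_singleton_le_pow [Finite α] {d : ℕ} (h : IsReduced E U)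
    (hL : ChainLengthLE E (d + 1)) : ∑ᶠ e ∈ E \ {U}, e.ncard ≤ U.ncard ^ d := by
  induction d generalizing E U with
  | zero =>
    rw [finsum_mem_eq_zero_of_forall_eq_zero fun e he => by
      rw [h.eq_empty_of_mem_sdiff hL he, ncard_empty]]
    exact Nat.zero_le _
  | succ m ih =>
    refine (finsum_ncard_le_mul (fun e he => h.subset_top e he.1) fun v hv => ?_).trans
      (pow_succ' _ _).ge
    set M := ⋂₀ {e ∈ E | v ∈ e}
    have hM : M ∈ E := sInter_mem_of_inter_mem h.inter_mem (fun e he => he.1) ⟨U, h.top_mem, hv⟩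
    have hvM : v ∈ M := mem_sInter.2 fun e he => he.2
    have hMU : M ⊆ U := sInter_subset_of_mem ⟨h.top_mem, hv⟩
    have hthrough : {e ∈ E \ {U} | v ∈ e} = {e ∈ E \ {U} | M ⊆ e} := by
      ext e
      exact and_congr_right fun he => ⟨fun hve => sInter_subset_of_mem ⟨he.1, hve⟩, (· hvM)⟩
    have hlink := h.link hM
    have hlinkL := hL.link h.empty_mem ⟨v, hvM⟩
    have hcard : (U \ M).ncard + 1 ≤ U.ncard :=
      ncard_lt_ncard (hMU.sdiff_ssubset_of_nonempty ⟨v, hvM⟩)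
    calc {e ∈ E \ {U} | v ∈ e}.ncard = (IntersectionClosed.link E M \ {U \ M}).ncard := by
          rw [hthrough, ncard_link_sdiff_singleton hMU]
      _ ≤ ((U \ M).ncard + 1) ^ m := hlink.ncard_sdiff_singleton_le hlinkL (ih hlink hlinkL)
      _ ≤ U.ncard ^ m := Nat.pow_le_pow_left hcard m

end IntersectionClosed

theorem stmt_7_general {α : Type*} [Fintype α] (E : Set (Set α))
    (hcl : Set.univ ∈ E ∧ ∀ a ∈ E, ∀ b ∈ E, a ∩ b ∈ E)
    (hred : ⋂₀ E = ∅) (d : ℕ)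
    (hL : ∀ (l : ℕ) (c : Fin (l+1) → Set α),
      (∀ i, c i ∈ E) → (∀ i j, i < j → c i ⊂ c j) → l ≤ d+1) :
    (∑ᶠ e ∈ (E \ {Set.univ} : Set (Set α)), Set.ncard e) ≤ (Fintype.card α) ^ d ∧
    (∑ᶠ e ∈ E, Set.ncard e) ≤ (Fintype.card α) ^ d + Fintype.card α := by
  have h0 : ∅ ∈ E := hred ▸ Set.sInter_mem_of_inter_mem hcl.2 subset_rfl ⟨_, hcl.1⟩
  have hproper := IntersectionClosed.IsReduced.finsum_ncard_sdiff_singleton_le_pow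
    ⟨fun e _ => Set.subset_univ e, hcl.1, h0, hcl.2⟩ (d := d) hL
  rw [Set.ncard_univ, Nat.card_eq_fintype_card] at hproper
  refine ⟨hproper, ?_⟩
  rw [← Set.insert_sdiff_self_of_mem hcl.1, finsum_mem_insert _ (by simp) (Set.toFinite _),
    Set.ncard_univ, Nat.card_eq_fintype_card]
  omega

/-- Theorem 2: for an intersection-closed reduced hypergraph `H` on `n` vertices with
`L(H) ≤ d+1`, the edges other than `V` have total size at most `n^d`, and hence
`‖H‖ ≤ n^d + n`. -/
theorem stmt_7 {α : Type*} [Fintype α] (E : Set (Set α))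
    (hcl : Set.univ ∈ E ∧ ∀ a ∈ E, ∀ b ∈ E, a ∩ b ∈ E)
    (hred : ⋂₀ E = ∅) (d : ℕ) (hd : 0 < d)
    (hL : ∀ (l : ℕ) (c : Fin (l+1) → Set α),
      (∀ i, c i ∈ E) → (∀ i j, i < j → c i ⊂ c j) → l ≤ d+1) :
    (∑ᶠ e ∈ (E \ {Set.univ} : Set (Set α)), Set.ncard e) ≤ (Fintype.card α) ^ d ∧
    (∑ᶠ e ∈ E, Set.ncard e) ≤ (Fintype.card α) ^ d + Fintype.card α :=
  stmt_7_general E hcl hred d hL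
end

section
/- Let H = (V,E) be an intersection-closed hypergraph with L(H) ≤ d+1 on n vertices. Then |E| ≤ 1 + ∑_{i=0}^{d} C(n,i), where C(n,i) is the binomial coefficient. -/
/-! Let `M S` be the intersection of all edges containing `S`; the edges are exactly the closed
sets of this closure operator. Every edge `e` is `M S` for some independent `S ⊆ e`, i.e. no `x ∈ S`
lies in `M (S \ {x})` (discard redundant elements one by one). Adding the elements of `S` one at a
time strictly enlarges the closure, so `M ∅ ⊂ ⋯ ⊂ M S = e` is a chain of edges of length `|S|`; when
`e ≠ V` it extends by `V`, so `L(H) ≤ d + 1` forces `|S| ≤ d`. Hence `E` is covered by `V` and the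
images under `M` of the sets of size at most `d`. -/

open Finset

namespace ClosureOperator

variable {α : Type*} {c : ClosureOperator (Set α)}

lemma closure_insert_of_mem {s : Set α} {x : α} (hx : x ∈ c s) : c (insert x s) = c s :=
  (c.closure_min (Set.insert_subset hx (c.le_closure s)) (c.isClosed_closure s)).antisymm
    (c.monotone (Set.subset_insert x s))

section Independent

variable [DecidableEq α]

variable (c) in
def IsIndependent (S : Finset α) : Prop :=
  ∀ x ∈ S, x ∉ c ↑(S.erase x)

lemma IsIndependent.mono {S T : Finset α} (hS : c.IsIndependent S) (hTS : T ⊆ S) :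
    c.IsIndependent T := fun x hxT hx ↦
  hS x (hTS hxT) (c.monotone (coe_subset.2 (erase_subset_erase x hTS)) hx)

variable (c) in
lemma exists_isIndependent_closure_eq (S : Finset α) :
    ∃ T ⊆ S, c.IsIndependent T ∧ c T = c S := by
  induction S using Finset.strongInduction with
  | H S ih =>
    by_cases hS : c.IsIndependent S
    · exact ⟨S, subset_rfl, hS, rfl⟩
    obtain ⟨x, hxS, hx⟩ : ∃ x ∈ S, x ∈ c ↑(S.erase x) := by
      simpa [IsIndependent] using hS
    obtain ⟨T, hTS, hT, hcT⟩ := ih _ (erase_ssubset hxS)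
    refine ⟨T, hTS.trans (erase_subset x S), hT, ?_⟩
    rw [hcT, ← closure_insert_of_mem hx, coe_erase, Set.insert_sdiff_singleton,
      Set.insert_eq_of_mem (mem_coe.2 hxS)]

lemma IsIndependent.exists_ltSeries {S : Finset α} (hS : c.IsIndependent S) :
    ∃ p : LTSeries (Set α), p.length = #S ∧ p.last = c S ∧ ∀ s ∈ p, c.IsClosed s := by
  induction S using Finset.induction_on with
  | empty =>
    refine ⟨RelSeries.singleton _ (c ∅), rfl, by simp, ?_⟩
    rintro s ⟨i, rfl⟩
    exact c.isClosed_closure _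
  | insert x T hxT ih =>
    obtain ⟨p, hlen, hlast, hclosed⟩ := ih (hS.mono (subset_insert x T))
    have hxT' : x ∉ c T := by simpa [erase_insert hxT] using hS x (mem_insert_self x T)
    have hlt : p.last < c ↑(insert x T) := by
      rw [hlast]
      refine (c.monotone (coe_subset.2 (subset_insert x T))).lt_of_ne fun h ↦ hxT' ?_
      exact h ▸ c.le_closure _ (by simp)
    refine ⟨p.snoc _ hlt, by simp [hlen, card_insert_of_notMem hxT], by simp, ?_⟩
    simp only [RelSeries.mem_snoc]
    rintro s (hs | rfl)
    exacts [hclosed s hs, c.isClosed_closure _]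

lemma IsIndependent.card_lt {n : ℕ}
    (hc : ∀ p : LTSeries (Set α), (∀ s ∈ p, c.IsClosed s) → p.length ≤ n)
    {S : Finset α} (hS : c.IsIndependent S) (hSuniv : c S ≠ Set.univ) : #S < n := by
  obtain ⟨p, hlen, hlast, hclosed⟩ := hS.exists_ltSeries
  have hlt : p.last < Set.univ := hlast ▸ hSuniv.lt_top
  have := hc (p.snoc _ hlt) <| by
    simp only [RelSeries.mem_snoc]
    rintro s (hs | rfl)
    exacts [hclosed s hs, c.isClosed_top]
  simpa [hlen] using this

end Independent

lemma ncard_setOf_isClosed_le [Fintype α] {d : ℕ}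
    (hc : ∀ p : LTSeries (Set α), (∀ s ∈ p, c.IsClosed s) → p.length ≤ d + 1) :
    {s | c.IsClosed s}.ncard ≤ 1 + ∑ i ∈ range (d + 1), (Fintype.card α).choose i := by
  classical
  set small : Finset (Finset α) := (range (d + 1)).biUnion fun i ↦ powersetCard i univ
  have hsub : {s | c.IsClosed s} ⊆ ↑(insert Set.univ (small.image fun S : Finset α ↦ c S)) := by
    intro s hs
    by_cases hs_univ : s = Set.univ
    · simp [hs_univ]
    obtain ⟨T, -, hT, hcT⟩ := exists_isIndependent_closure_eq c (Set.toFinite s).toFinset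
    rw [Set.Finite.coe_toFinset, hs.closure_eq] at hcT
    have hTcard := hT.card_lt hc (hcT ▸ hs_univ)
    simp only [coe_insert, coe_image, Set.mem_insert_iff, Set.mem_image, mem_coe, small,
      mem_biUnion, mem_range, mem_powersetCard_univ]
    exact Or.inr ⟨T, ⟨#T, hTcard, rfl⟩, hcT⟩
  calc {s | c.IsClosed s}.ncard
      ≤ #(insert Set.univ (small.image fun S : Finset α ↦ c S)) := by
        rw [← Set.ncard_coe_finset]
        exact Set.ncard_le_ncard hsub
    _ ≤ #(small.image fun S : Finset α ↦ c S) + 1 := card_insert_le _ _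
    _ ≤ #small + 1 := by grw [card_image_le]
    _ ≤ 1 + ∑ i ∈ range (d + 1), (Fintype.card α).choose i := by
        rw [add_comm]
        grw [card_biUnion_le]
        simp [card_powersetCard]

end ClosureOperator

lemma Set.sInter_mem_of_finite {α : Type*} {E : Set (Set α)}
    (hcl : Set.univ ∈ E ∧ ∀ a ∈ E, ∀ b ∈ E, a ∩ b ∈ E) {F : Set (Set α)} (hF : F.Finite)
    (hFE : F ⊆ E) : ⋂₀ F ∈ E := by
  induction F, hF using Set.Finite.induction_on with
  | empty => simpa using hcl.1
  | @insert a F _ _ ih =>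
    rw [Set.insert_subset_iff] at hFE
    simpa using hcl.2 a hFE.1 _ (ih hFE.2)

/-- For an intersection-closed hypergraph on `n` vertices with `L(H) ≤ d+1`, the
number of edges is at most `1 + ∑_{i=0}^{d} C(n,i)`. -/
theorem stmt_8 {α : Type*} [Fintype α] (E : Set (Set α))
    (hcl : Set.univ ∈ E ∧ ∀ a ∈ E, ∀ b ∈ E, a ∩ b ∈ E)
    (d : ℕ)
    (hL : ∀ (l : ℕ) (c : Fin (l+1) → Set α),
      (∀ i, c i ∈ E) → (∀ i j, i < j → c i ⊂ c j) → l ≤ d+1) :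
    E.ncard ≤ 1 + ∑ i ∈ Finset.range (d+1), (Fintype.card α).choose i := by
  let c := ClosureOperator.ofCompletePred (· ∈ E) fun F hF ↦
    Set.sInter_mem_of_finite hcl (Set.toFinite F) hF
  exact c.ncard_setOf_isClosed_le fun p hp ↦
    hL p.length p (fun i ↦ hp _ ⟨i, rfl⟩) fun i j hij ↦ p.strictMono hij
end

section
/- Let H = (V,E) be an intersection-closed hypergraph with L(H) ≤ d+1 and ⋂_{e∈E} e = ∅. Then every edge e ∈ E with e ≠ V can be written as M_H(S) for some set S ⊆ V with |S| ≤ d, where M_H(S) is the intersection of all edges of H containing S; moreover S can be chosen so that for any prescribed v ∈ e, v ∈ S. -/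
/-!
Start from `S = ∅` or `S = {v}` and, while `M(S) ≠ e`, add a vertex `u ∈ e \ M(S)`.
Each step strictly enlarges the closed set `M(S)`, so the height of `M(S)` in the poset of edges
grows at least as fast as `|S|` (for `S = {v}` because `∅ = M(∅) ⊂ M({v})`). When the process stops,
`|S| ≤ height e`, and `e ⊂ V` leaves room for one more edge above it in a chain of length at
most `d + 1`, so `height e ≤ d`.
-/

open Order Set

section

variable {α : Type*} {E : Set (Set α)}

lemma subset_M (S : Set α) : S ⊆ M E S :=
  fun _ hx => mem_sInter.mpr fun _ hf => hf.2 hx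

lemma M_mono : Monotone (M E) :=
  fun _ _ hST => sInter_subset_sInter fun _ hf => ⟨hf.1, hST.trans hf.2⟩

lemma M_subset {S e : Set α} (he : e ∈ E) (hSe : S ⊆ e) : M E S ⊆ e :=
  sInter_subset_of_mem ⟨he, hSe⟩

lemma M_mem (hE : ∀ F ⊆ E, ⋂₀ F ∈ E) (S : Set α) : M E S ∈ E :=
  hE _ fun _ hf => hf.1

lemma height_le_of_chain_length_le {n : ℕ}
    (hL : ∀ (l : ℕ) (c : Fin (l + 1) → Set α),
      (∀ i, c i ∈ E) → (∀ i j, i < j → c i ⊂ c j) → l ≤ n) (x : E) :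
    height x ≤ n :=
  height_le fun p _ => by
    exact_mod_cast hL p.length (fun i => p i) (fun i => (p i).2) fun _ _ hij => p.strictMono hij

lemma exists_M_eq_of_ncard_le_height [Finite α] (hE : ∀ F ⊆ E, ⋂₀ F ∈ E)
    {e S : Set α} (he : e ∈ E) (hSe : S ⊆ e)
    (hS : S.ncard ≤ height (⟨M E S, M_mem hE S⟩ : E)) :
    ∃ T, S ⊆ T ∧ T.ncard ≤ height (⟨e, he⟩ : E) ∧ M E T = e := by
  by_cases hMe : M E S = e
  · exact ⟨S, subset_rfl, by simpa only [hMe] using hS, hMe⟩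
  obtain ⟨u, hue, huM⟩ : (e \ M E S).Nonempty :=
    sdiff_nonempty.mpr fun h => hMe ((M_subset he hSe).antisymm h)
  have hMlt : (⟨M E S, M_mem hE S⟩ : E) < ⟨M E (insert u S), M_mem hE _⟩ :=
    ssubset_iff_of_subset (M_mono (subset_insert u S)) |>.mpr
      ⟨u, subset_M _ (mem_insert u S), huM⟩
  have hS' : (insert u S).ncard ≤ height (⟨M E (insert u S), M_mem hE _⟩ : E) := by
    rw [ncard_insert_of_notMem fun hu => huM (subset_M S hu), Nat.cast_add_one]
    exact (add_le_add_left hS 1).trans (height_add_one_le hMlt)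
  obtain ⟨T, hST, hT, hTe⟩ :=
    exists_M_eq_of_ncard_le_height hE he (insert_subset hue hSe) hS'
  exact ⟨T, (subset_insert u S).trans hST, hT, hTe⟩
termination_by (M E S)ᶜ.ncard
decreasing_by exact ncard_lt_ncard (compl_lt_compl_iff_lt.mpr hMlt)

lemma one_le_height_M_singleton (hE : ∀ F ⊆ E, ⋂₀ F ∈ E) (hred : ⋂₀ E = ∅) (v : α) :
    1 ≤ height (⟨M E {v}, M_mem hE {v}⟩ : E) := by
  have hbot : (∅ : Set α) ∈ E := hred ▸ hE E subset_rfl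
  have hlt : (⟨∅, hbot⟩ : E) < ⟨M E {v}, M_mem hE {v}⟩ :=
    empty_ssubset.mpr ⟨v, subset_M {v} rfl⟩
  exact le_add_self.trans (height_add_one_le hlt)

end

/-- In an intersection-closed reduced hypergraph with `L(H) ≤ d+1`, every edge
`e ≠ V` equals `M_H(S)` for some `S` with `|S| ≤ d`; moreover for any prescribed
`v ∈ e`, the set `S` can be chosen with `v ∈ S`. -/
theorem stmt_15 {α : Type*} [Fintype α] (E : Set (Set α))
    (hcl : Set.univ ∈ E ∧ ∀ a ∈ E, ∀ b ∈ E, a ∩ b ∈ E)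
    (hred : ⋂₀ E = ∅) (d : ℕ)
    (hL : ∀ (l : ℕ) (c : Fin (l+1) → Set α),
      (∀ i, c i ∈ E) → (∀ i j, i < j → c i ⊂ c j) → l ≤ d+1) :
    ∀ e ∈ E, e ≠ Set.univ →
      (∃ S : Set α, S.ncard ≤ d ∧ M E S = e) ∧
      ∀ v ∈ e, ∃ S : Set α, v ∈ S ∧ S.ncard ≤ d ∧ M E S = e := by
  intro e he hne
  have hE : ∀ F ⊆ E, ⋂₀ F ∈ E := fun F hF =>
    InfClosed.sInf_mem (s := E) hcl.2 (toFinite F) hcl.1 hF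
  have hd : height (⟨e, he⟩ : E) ≤ d := by
    have hlt : (⟨e, he⟩ : E) < ⟨univ, hcl.1⟩ := ssubset_univ_iff.mpr hne
    have := (height_add_one_le hlt).trans (height_le_of_chain_length_le hL _)
    rw [Nat.cast_add_one] at this
    exact (WithTop.add_le_add_iff_right ENat.one_ne_top).mp this
  refine ⟨?_, fun v hv => ?_⟩
  · obtain ⟨T, -, hT, hTe⟩ :=
      exists_M_eq_of_ncard_le_height hE he (empty_subset e) (by simp)
    exact ⟨T, by exact_mod_cast hT.trans hd, hTe⟩
  · obtain ⟨T, hvT, hT, hTe⟩ := exists_M_eq_of_ncard_le_height hE he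
      (singleton_subset_iff.mpr hv) (by simpa using one_le_height_M_singleton hE hred v)
    exact ⟨T, hvT rfl, by exact_mod_cast hT.trans hd, hTe⟩
end
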